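/- For an informationally complete (N,M)-POVM on a d-dimensional Hilbert space with parameter x (i.e., N(M-1)=d²-1, tr(E_{α,k})=d/M, tr(E_{α,k}²)=x, tr(E_{α,k}E_{α,l})=(d-Mx)/(M(M-1)) for k≠l, tr(E_{α,k}E_{β,l})=d/M² for α≠β), the operator identity ∑_{α=1}^{N}∑_{k=1}^{M} E_{α,k} ⊗ E_{α,k} = ((xM²−d)/(M(M−1)))·F + ((d³−xM²)/(dM(M−1)))·I holds, where F = ∑_{i,j=1}^{d} |e_i⟩⟨e_j| ⊗ |e_j⟩⟨e_i| is the swap (flip) operator in any orthonormal basis {e_i}. -/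

import Mathlib

open Matrix Kronecker BigOperators
open scoped ComplexOrder

noncomputable def traceNorm {n : Type*} [Fintype n] [DecidableEq n] (A : Matrix n n ℂ) : ℝ :=
  ((Matrix.posSemidef_conjTranspose_mul_self (R := ℂ) A).1.eigenvectorUnitary.1 *
    diagonal (((↑) : ℝ → ℂ) ∘ (√·) ∘ (Matrix.posSemidef_conjTranspose_mul_self (R := ℂ) A).1.eigenvalues) *
    (star (Matrix.posSemidef_conjTranspose_mul_self (R := ℂ) A).1.eigenvectorUnitary :
      Matrix n n ℂ)).trace.re

/-- A symmetric `(N,M)`-POVM with parameter `x` on a `d`-dimensional Hilbert space. -/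
def IsNMPOVM (d N M : ℕ) (x : ℝ) (E : Fin N → Fin M → Matrix (Fin d) (Fin d) ℂ) : Prop :=
  (∀ α k, (E α k).PosSemidef) ∧
  (∀ α, ∑ k, E α k = 1) ∧
  (∀ α k, (E α k).trace = (d : ℂ) / (M : ℂ)) ∧
  (∀ α k, (E α k * E α k).trace = (x : ℂ)) ∧
  (∀ α k l, k ≠ l →
    (E α k * E α l).trace = ((d : ℂ) - (M : ℂ) * (x : ℂ)) / ((M : ℂ) * ((M : ℂ) - 1))) ∧
  (∀ α β k l, α ≠ β → (E α k * E β l).trace = (d : ℂ) / (M : ℂ) ^ 2)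

/-- The swap (flip) operator `F` on `H ⊗ H`. -/
def swapOp (d : ℕ) : Matrix (Fin d × Fin d) (Fin d × Fin d) ℂ :=
  Matrix.of fun p q => if p.1 = q.2 ∧ p.2 = q.1 then 1 else 0

lemma swapOp_herm (d : ℕ) : (swapOp d)ᴴ = swapOp d := by
  ext p q
  simp only [swapOp, conjTranspose_apply, of_apply]
  by_cases h : p.1 = q.2 ∧ p.2 = q.1
  · rw [if_pos h, if_pos ⟨h.2.symm, h.1.symm⟩]; simp
  · have h' : ¬ (q.1 = p.2 ∧ q.2 = p.1) := fun ⟨a, b⟩ => h ⟨b.symm, a.symm⟩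
    rw [if_neg h', if_neg h]; simp

lemma swapOp_mul_self (d : ℕ) : swapOp d * swapOp d = 1 := by
  ext p q
  simp only [mul_apply, swapOp, of_apply, one_apply, Fintype.sum_prod_type, ite_and,
    Finset.sum_ite_eq, Finset.mem_univ, if_true]
  by_cases h1 : p.1 = q.1 <;> by_cases h2 : p.2 = q.2 <;>
    simp [Prod.ext_iff, h1, h2, eq_comm]

lemma swapOp_trace (d : ℕ) : (swapOp d).trace = d := by
  simp only [Matrix.trace, Matrix.diag, swapOp, of_apply, Fintype.sum_prod_type, and_self, ite_and]
  simp [Finset.sum_ite_eq]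

lemma trace_kron_swap {d : ℕ} (A B : Matrix (Fin d) (Fin d) ℂ) :
    ((A ⊗ₖ B) * swapOp d).trace = (A * B).trace := by
  simp only [Matrix.trace, Matrix.diag, mul_apply, swapOp, of_apply, kroneckerMap_apply,
    Fintype.sum_prod_type, mul_ite, mul_one, mul_zero, ite_and, Finset.sum_ite_eq',
    Finset.mem_univ, if_true, Finset.sum_ite_irrel, Finset.sum_const_zero]

lemma kron_conjTranspose {d : ℕ} (A B : Matrix (Fin d) (Fin d) ℂ) :
    (A ⊗ₖ B)ᴴ = Aᴴ ⊗ₖ Bᴴ := by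
  ext p q
  simp [conjTranspose_apply, kroneckerMap_apply, star_mul', mul_comm]

lemma mat_eq_zero_of_trace_conjT {n : Type*} [Fintype n] (A : Matrix n n ℂ)
    (h : (Aᴴ * A).trace = 0) : A = 0 := by
  have h1 : (Aᴴ * A).trace = ((∑ j, ∑ i, Complex.normSq (A i j) : ℝ) : ℂ) := by
    simp only [Matrix.trace, Matrix.diag, Matrix.mul_apply, Matrix.conjTranspose_apply]
    push_cast
    refine Finset.sum_congr rfl fun j _ => Finset.sum_congr rfl fun i _ => ?_
    rw [Complex.normSq_eq_conj_mul_self]; rfl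
  rw [h1] at h
  have h2 : ∑ j, ∑ i, Complex.normSq (A i j) = 0 := by exact_mod_cast h
  ext i j
  have hj := (Finset.sum_eq_zero_iff_of_nonneg
    (fun j _ => Finset.sum_nonneg fun i _ => Complex.normSq_nonneg _)).mp h2 j (Finset.mem_univ j)
  have hi := (Finset.sum_eq_zero_iff_of_nonneg
    (fun i _ => Complex.normSq_nonneg _)).mp hj i (Finset.mem_univ i)
  simpa using Complex.normSq_eq_zero.mp hi

set_option maxHeartbeats 1000000 in
lemma scalar_final (D m y : ℂ) (hM0 : m ≠ 0) (hM1 : m - 1 ≠ 0) (hd0 : D ≠ 0) :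
    (D ^ 2 - 1) / (m - 1) *
          (m * y ^ 2 + m * (m - 1) * ((D - m * y) / (m * (m - 1))) ^ 2 +
            ((D ^ 2 - 1) / (m - 1) - 1) * (m ^ 2 * (D / m ^ 2) ^ 2)) -
        ((y * m ^ 2 - D) / (m * (m - 1)) * ((D ^ 2 - 1) / (m - 1) * (m * y)) +
          (D ^ 3 - y * m ^ 2) / (D * m * (m - 1)) * ((D ^ 2 - 1) / (m - 1) * (m * (D / m) ^ 2))) -
      ((y * m ^ 2 - D) / (m * (m - 1)) *
          ((D ^ 2 - 1) / (m - 1) * (m * y) -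
            ((y * m ^ 2 - D) / (m * (m - 1)) * (D * D) + (D ^ 3 - y * m ^ 2) / (D * m * (m - 1)) * D)) +
        (D ^ 3 - y * m ^ 2) / (D * m * (m - 1)) *
          ((D ^ 2 - 1) / (m - 1) * (m * (D / m) ^ 2) -
            ((y * m ^ 2 - D) / (m * (m - 1)) * D + (D ^ 3 - y * m ^ 2) / (D * m * (m - 1)) * (D * D)))) = 0 := by
  field_simp
  ring

theorem conical_two_design_identity (d N M : ℕ) (x : ℝ)
    (E : Fin N → Fin M → Matrix (Fin d) (Fin d) ℂ)
    (hd : 2 < d) (hM : 2 ≤ M)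
    (hPOVM : IsNMPOVM d N M x E)
    (hx : (d : ℝ) / (M : ℝ) ^ 2 < x ∧
      x ≤ min ((d : ℝ) ^ 2 / (M : ℝ) ^ 2) ((d : ℝ) / (M : ℝ)))
    (hIC : N * (M - 1) = d ^ 2 - 1) :
    ∑ α, ∑ k, (E α k) ⊗ₖ (E α k)
      = (((x * (M : ℝ) ^ 2 - (d : ℝ)) / ((M : ℝ) * ((M : ℝ) - 1)) : ℝ) : ℂ) • swapOp d
        + ((((d : ℝ) ^ 3 - x * (M : ℝ) ^ 2) / ((d : ℝ) * (M : ℝ) * ((M : ℝ) - 1)) : ℝ) : ℂ) •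
          (1 : Matrix (Fin d × Fin d) (Fin d × Fin d) ℂ) := by
  obtain ⟨hpsd, hsum, htr, htr2, htrkl, htrab⟩ := hPOVM
  -- basic nonvanishing facts
  have hM0 : (M : ℂ) ≠ 0 := Nat.cast_ne_zero.mpr (by omega)
  have hM1 : (M : ℂ) - 1 ≠ 0 := by
    intro h
    have : (M : ℂ) = ((1 : ℕ) : ℂ) := by push_cast; linear_combination h
    have := Nat.cast_injective (R := ℂ) this
    omega
  have hd0 : (d : ℂ) ≠ 0 := Nat.cast_ne_zero.mpr (by omega)
  have h1d2 : 1 ≤ d ^ 2 := by nlinarith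
  have hNc : (N : ℂ) * ((M : ℂ) - 1) = (d : ℂ) ^ 2 - 1 := by
    have h1 : ((N * (M - 1) : ℕ) : ℂ) = ((d ^ 2 - 1 : ℕ) : ℂ) := by exact_mod_cast hIC
    rwa [Nat.cast_mul, Nat.cast_sub (by omega), Nat.cast_sub h1d2, Nat.cast_pow,
      Nat.cast_one] at h1
  have hNpos : 0 < N := by
    rcases Nat.eq_zero_or_pos N with h | h
    · exfalso
      subst h
      rw [zero_mul] at hIC
      have : d ^ 2 ≤ 1 := by omega
      nlinarith
    · exact h
  have hNval : (N : ℂ) = ((d : ℂ) ^ 2 - 1) / ((M : ℂ) - 1) := by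
    rw [eq_div_iff hM1]; exact hNc
  set a : ℂ := (((x * (M : ℝ) ^ 2 - (d : ℝ)) / ((M : ℝ) * ((M : ℝ) - 1)) : ℝ) : ℂ) with ha
  set b : ℂ := ((((d : ℝ) ^ 3 - x * (M : ℝ) ^ 2) / ((d : ℝ) * (M : ℝ) * ((M : ℝ) - 1)) : ℝ) : ℂ)
    with hb
  set c : ℂ := ((d : ℂ) - (M : ℂ) * (x : ℂ)) / ((M : ℂ) * ((M : ℂ) - 1)) with hc
  have haval : a = ((x : ℂ) * (M : ℂ) ^ 2 - (d : ℂ)) / ((M : ℂ) * ((M : ℂ) - 1)) := by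
    rw [ha]; push_cast; ring
  have hbval : b = ((d : ℂ) ^ 3 - (x : ℂ) * (M : ℂ) ^ 2) / ((d : ℂ) * (M : ℂ) * ((M : ℂ) - 1)) := by
    rw [hb]; push_cast; ring
  set T : Matrix (Fin d × Fin d) (Fin d × Fin d) ℂ := ∑ α, ∑ k, (E α k) ⊗ₖ (E α k) with hT
  set S : Matrix (Fin d × Fin d) (Fin d × Fin d) ℂ := T - (a • swapOp d + b • 1) with hS
  clear_value a b c T S
  suffices hS0 : S = 0 by
    rw [hS, sub_eq_zero] at hS0
    exact hS0
  -- S is Hermitian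
  have hEh : ∀ α k, (E α k)ᴴ = E α k := fun α k => (hpsd α k).1
  have hsa : star a = a := by rw [ha]; exact Complex.conj_ofReal _
  have hsb : star b = b := by rw [hb]; exact Complex.conj_ofReal _
  have hTh : Tᴴ = T := by
    rw [hT, Matrix.conjTranspose_sum]
    refine Finset.sum_congr rfl fun α _ => ?_
    rw [Matrix.conjTranspose_sum]
    refine Finset.sum_congr rfl fun k _ => ?_
    rw [kron_conjTranspose, hEh]
  have hSh : Sᴴ = S := by
    rw [hS, Matrix.conjTranspose_sub, Matrix.conjTranspose_add, Matrix.conjTranspose_smul,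
      Matrix.conjTranspose_smul, Matrix.conjTranspose_one, swapOp_herm, hTh, hsa, hsb]
  -- trace computations
  have hcard : (Finset.univ : Finset (Fin M)).card = M := by
    rw [Finset.card_univ, Fintype.card_fin]
  have hcardN : (Finset.univ : Finset (Fin N)).card = N := by
    rw [Finset.card_univ, Fintype.card_fin]
  have hTtr : T.trace = (N : ℂ) * ((M : ℂ) * ((d : ℂ) / (M : ℂ)) ^ 2) := by
    rw [hT, Matrix.trace_sum]
    have hrow : ∀ α : Fin N, (∑ k, (E α k) ⊗ₖ (E α k)).trace
        = (M : ℂ) * ((d : ℂ) / (M : ℂ)) ^ 2 := by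
      intro α
      rw [Matrix.trace_sum]
      have : ∀ k ∈ (Finset.univ : Finset (Fin M)),
          ((E α k) ⊗ₖ (E α k)).trace = ((d : ℂ) / (M : ℂ)) ^ 2 := fun k _ => by
        rw [trace_kronecker, htr, sq]
      rw [Finset.sum_congr rfl this, Finset.sum_const, hcard, nsmul_eq_mul]
    rw [Finset.sum_congr rfl fun α _ => hrow α, Finset.sum_const, hcardN, nsmul_eq_mul]
  have hTF : (T * swapOp d).trace = (N : ℂ) * ((M : ℂ) * (x : ℂ)) := by
    rw [hT, Finset.sum_mul, Matrix.trace_sum]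
    have hrow : ∀ α : Fin N, ((∑ k, (E α k) ⊗ₖ (E α k)) * swapOp d).trace
        = (M : ℂ) * (x : ℂ) := by
      intro α
      rw [Finset.sum_mul, Matrix.trace_sum]
      have : ∀ k ∈ (Finset.univ : Finset (Fin M)),
          (((E α k) ⊗ₖ (E α k)) * swapOp d).trace = (x : ℂ) := fun k _ => by
        rw [trace_kron_swap, htr2]
      rw [Finset.sum_congr rfl this, Finset.sum_const, hcard, nsmul_eq_mul]
    rw [Finset.sum_congr rfl fun α _ => hrow α, Finset.sum_const, hcardN, nsmul_eq_mul]
  have hFT : (swapOp d * T).trace = (N : ℂ) * ((M : ℂ) * (x : ℂ)) := by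
    rw [Matrix.trace_mul_comm]; exact hTF
  have hTT : (T * T).trace
      = ∑ α, ∑ k, ∑ β, ∑ l, (E α k * E β l).trace * (E α k * E β l).trace := by
    rw [hT, Finset.sum_mul, Matrix.trace_sum]
    refine Finset.sum_congr rfl fun α _ => ?_
    rw [Finset.sum_mul, Matrix.trace_sum]
    refine Finset.sum_congr rfl fun k _ => ?_
    rw [Finset.mul_sum, Matrix.trace_sum]
    refine Finset.sum_congr rfl fun β _ => ?_
    rw [Finset.mul_sum, Matrix.trace_sum]
    refine Finset.sum_congr rfl fun l _ => ?_
    rw [← mul_kronecker_mul, trace_kronecker]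
  have hTT' : (T * T).trace
      = ∑ α, ∑ β, ∑ k, ∑ l, (E α k * E β l).trace * (E α k * E β l).trace := by
    rw [hTT]
    exact Finset.sum_congr rfl fun α _ => Finset.sum_comm
  have pair : ∀ α β : Fin N, (∑ k, ∑ l, (E α k * E β l).trace * (E α k * E β l).trace)
      = if α = β then (M : ℂ) * (x : ℂ) ^ 2 + (M : ℂ) * ((M : ℂ) - 1) * c ^ 2
        else (M : ℂ) ^ 2 * ((d : ℂ) / (M : ℂ) ^ 2) ^ 2 := by
    intro α β
    by_cases hab : α = β
    · subst hab
      rw [if_pos rfl]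
      have hk : ∀ k ∈ (Finset.univ : Finset (Fin M)),
          (∑ l, (E α k * E α l).trace * (E α k * E α l).trace)
          = (x : ℂ) ^ 2 + ((M : ℂ) - 1) * c ^ 2 := by
        intro k _
        rw [← Finset.add_sum_erase _ _ (Finset.mem_univ k), htr2]
        have herase : ∀ l ∈ Finset.univ.erase k,
            (E α k * E α l).trace * (E α k * E α l).trace = c * c := fun l hl => by
          rw [htrkl α k l (Ne.symm (Finset.mem_erase.mp hl).1)]
        rw [Finset.sum_congr rfl herase, Finset.sum_const,
          Finset.card_erase_of_mem (Finset.mem_univ k), hcard, nsmul_eq_mul,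
          Nat.cast_sub (by omega : 1 ≤ M), Nat.cast_one]
        ring
      rw [Finset.sum_congr rfl hk, Finset.sum_const, hcard, nsmul_eq_mul]
      ring
    · rw [if_neg hab]
      have hk : ∀ k ∈ (Finset.univ : Finset (Fin M)),
          (∑ l, (E α k * E β l).trace * (E α k * E β l).trace)
          = (M : ℂ) * ((d : ℂ) / (M : ℂ) ^ 2) ^ 2 := by
        intro k _
        have : ∀ l ∈ (Finset.univ : Finset (Fin M)),
            (E α k * E β l).trace * (E α k * E β l).trace
            = ((d : ℂ) / (M : ℂ) ^ 2) ^ 2 := fun l _ => by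
          rw [htrab α β k l hab]; ring
        rw [Finset.sum_congr rfl this, Finset.sum_const, hcard, nsmul_eq_mul]
      rw [Finset.sum_congr rfl hk, Finset.sum_const, hcard, nsmul_eq_mul]
      ring
  have hTTval : (T * T).trace
      = (N : ℂ) * (((M : ℂ) * (x : ℂ) ^ 2 + (M : ℂ) * ((M : ℂ) - 1) * c ^ 2)
        + ((N : ℂ) - 1) * ((M : ℂ) ^ 2 * ((d : ℂ) / (M : ℂ) ^ 2) ^ 2)) := by
    rw [hTT', Finset.sum_congr rfl fun α _ => Finset.sum_congr rfl fun β _ => pair α β]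
    have hrow : ∀ α ∈ (Finset.univ : Finset (Fin N)),
        (∑ β, if α = β then (M : ℂ) * (x : ℂ) ^ 2 + (M : ℂ) * ((M : ℂ) - 1) * c ^ 2
          else (M : ℂ) ^ 2 * ((d : ℂ) / (M : ℂ) ^ 2) ^ 2)
        = ((M : ℂ) * (x : ℂ) ^ 2 + (M : ℂ) * ((M : ℂ) - 1) * c ^ 2)
          + ((N : ℂ) - 1) * ((M : ℂ) ^ 2 * ((d : ℂ) / (M : ℂ) ^ 2) ^ 2) := by
      intro α _
      rw [← Finset.add_sum_erase _ _ (Finset.mem_univ α), if_pos rfl]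
      have herase : ∀ β ∈ Finset.univ.erase α,
          (if α = β then (M : ℂ) * (x : ℂ) ^ 2 + (M : ℂ) * ((M : ℂ) - 1) * c ^ 2
            else (M : ℂ) ^ 2 * ((d : ℂ) / (M : ℂ) ^ 2) ^ 2)
          = (M : ℂ) ^ 2 * ((d : ℂ) / (M : ℂ) ^ 2) ^ 2 := fun β hβ =>
        if_neg fun h => (Finset.mem_erase.mp hβ).1 h.symm
      rw [Finset.sum_congr rfl herase, Finset.sum_const,
        Finset.card_erase_of_mem (Finset.mem_univ α), hcardN, nsmul_eq_mul,
        Nat.cast_sub (by omega : 1 ≤ N), Nat.cast_one]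
    rw [Finset.sum_congr rfl hrow, Finset.sum_const, hcardN, nsmul_eq_mul]
  -- trace of S² is zero
  have hSS : (Sᴴ * S).trace = 0 := by
    rw [hSh]
    have step4 : S.trace = T.trace - (a * (swapOp d).trace
        + b * (1 : Matrix (Fin d × Fin d) (Fin d × Fin d) ℂ).trace) := by
      rw [hS, Matrix.trace_sub, Matrix.trace_add, Matrix.trace_smul, Matrix.trace_smul,
        smul_eq_mul, smul_eq_mul]
    have step2 : (T * S).trace = (T * T).trace - (a * (T * swapOp d).trace
        + b * T.trace) := by
      nth_rewrite 1 [hS]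
      rw [mul_sub, mul_add, mul_smul_comm, mul_smul_comm, Matrix.mul_one,
        Matrix.trace_sub, Matrix.trace_add, Matrix.trace_smul, Matrix.trace_smul,
        smul_eq_mul, smul_eq_mul]
    have step3 : (swapOp d * S).trace = (swapOp d * T).trace
        - (a * (swapOp d * swapOp d).trace + b * (swapOp d).trace) := by
      nth_rewrite 1 [hS]
      rw [mul_sub, mul_add, mul_smul_comm, mul_smul_comm, Matrix.mul_one,
        Matrix.trace_sub, Matrix.trace_add, Matrix.trace_smul, Matrix.trace_smul,
        smul_eq_mul, smul_eq_mul]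
    have step1 : (S * S).trace = (T * S).trace - (a * (swapOp d * S).trace
        + b * S.trace) := by
      nth_rewrite 1 [hS]
      rw [sub_mul, add_mul, smul_mul_assoc, smul_mul_assoc, Matrix.one_mul,
        Matrix.trace_sub, Matrix.trace_add, Matrix.trace_smul, Matrix.trace_smul,
        smul_eq_mul, smul_eq_mul]
    rw [step1, step2, step3, step4, hTTval, hTF, hFT, hTtr, swapOp_mul_self, swapOp_trace,
      Matrix.trace_one]
    rw [haval, hbval, hc, hNval]
    have hcardprod : ((Fintype.card (Fin d × Fin d) : ℕ) : ℂ) = (d : ℂ) * (d : ℂ) := by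
      rw [Fintype.card_prod, Fintype.card_fin]
      push_cast
      ring
    rw [hcardprod]
    exact scalar_final (d : ℂ) (M : ℂ) (x : ℂ) hM0 hM1 hd0
  have := mat_eq_zero_of_trace_conjT S hSS
  exact this
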